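/- There exists a positive constant C such that, if p = C((log n)/n)^{1/2}, then asymptotically almost surely the random graph G(n,p) on V satisfies: for every k ∈ {1,2}, every collection 𝒮 of pairwise disjoint k-element subsets of V with |𝒮| ≥ ((log n)/C^{k−1})(n/log n)^{k/2}, and every U ⊆ V with U ∩ ⋃_{L∈𝒮} L = ∅ and |U| ≥ ((log n)/C^{k−1})(n/log n)^{k/2}, the bipartite graph B(𝒮,U) has at least one edge. -/

import Mathlib

open MeasureTheory

abbrev EdgeType (n : ℕ) := {e : Sym2 (Fin n) // ¬ e.IsDiag}

noncomputable def bernoulliBool (p : ℝ) : Measure Bool :=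
  ENNReal.ofReal p • Measure.dirac true + ENNReal.ofReal (1 - p) • Measure.dirac false

instance (p : ℝ) : IsFiniteMeasure (bernoulliBool p) := by
  constructor
  simp [bernoulliBool, Measure.add_apply, Measure.smul_apply]

noncomputable def gnp (n : ℕ) (p : ℝ) : Measure (EdgeType n → Bool) :=
  Measure.pi fun _ => bernoulliBool p

def graphOf {n : ℕ} (ω : EdgeType n → Bool) : SimpleGraph (Fin n) :=
  SimpleGraph.fromEdgeSet {e | ∃ h : ¬ e.IsDiag, ω ⟨e, h⟩ = true}

noncomputable section

/-- δ = 0.01 -/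
def dlt : ℝ := 0.01
/-- ε = 0.001 -/
def eps : ℝ := 0.001

/-- The number of vertices `u ∈ U` having a neighbor in `𝒮` in the bipartite
graph `B(𝒮,U)`, i.e. such that `L ⊆ N_G(u)` for some `L ∈ 𝒮`.  This is
`|N_{B(𝒮,U)}(𝒮)|`. -/
def coveredCount {n : ℕ} (G : SimpleGraph (Fin n))
    (S : Finset (Finset (Fin n))) (U : Finset (Fin n)) : ℕ :=
  {u ∈ (U : Set (Fin n)) | ∃ L ∈ S, ∀ x ∈ L, G.Adj x u}.ncard

/-- The number of edges `e ∈ 𝓜` such that some `u ∈ U` is adjacent (in `G`)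
to both endpoints of `e`. -/
def hitCount {n : ℕ} (G : SimpleGraph (Fin n))
    (M : Finset (Finset (Fin n))) (U : Finset (Fin n)) : ℕ :=
  {e ∈ (M : Set (Finset (Fin n))) | ∃ u ∈ U, ∀ x ∈ e, G.Adj x u}.ncard

/-- `M` is a matching of `G[V₀]` of size `2εn` witnessing property (P1). -/
def P1Witness {n : ℕ} (C : ℝ) (V0 : Finset (Fin n)) (G : SimpleGraph (Fin n))
    (M : Finset (Finset (Fin n))) : Prop :=
  (∀ e ∈ M, ∃ a b : Fin n, G.Adj a b ∧ a ∈ V0 ∧ b ∈ V0 ∧ e = {a, b}) ∧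
  (∀ e ∈ M, ∀ e' ∈ M, e ≠ e' → Disjoint e e') ∧
  (M.card : ℝ) = 2 * eps * n ∧
  ∀ U : Finset (Fin n), Disjoint U (M.biUnion id) →
    (U.card : ℝ) ≤ dlt * n / (C ^ 2 * Real.log n) →
    C ^ 2 * Real.log n / (16 * n) * M.card * U.card ≤ (hitCount G M U : ℝ)

/-- Property (P1). -/
def PropP1 {n : ℕ} (C : ℝ) (V0 : Finset (Fin n)) (G : SimpleGraph (Fin n)) : Prop :=
  ∃ M : Finset (Finset (Fin n)), P1Witness C V0 G M

/-- First half of property (P2): for small families `𝒮` of disjoint `k`-sets,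
`|N_{B(𝒮,V_i)}(𝒮)| ≥ (1-δ) Cᵏ (log n / n)^{k/2} |𝒮| |V_i|`. -/
def PropP2a {n : ℕ} (C : ℝ) (V : Fin 7 → Finset (Fin n)) (G : SimpleGraph (Fin n)) : Prop :=
  ∀ k : ℕ, (k = 1 ∨ k = 2) →
    ∀ S : Finset (Finset (Fin n)), (∀ L ∈ S, L.card = k) →
      (∀ L ∈ S, ∀ L' ∈ S, L ≠ L' → Disjoint L L') →
      (S.card : ℝ) ≤ dlt / C ^ k * ((n : ℝ) / Real.log n) ^ ((k : ℝ) / 2) →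
      ∀ i : Fin 7, i ≠ 0 → Disjoint (V i) (S.biUnion id) →
        (1 - dlt) * C ^ k * (Real.log n / n) ^ ((k : ℝ) / 2) * S.card * (V i).card
          ≤ (coveredCount G S (V i) : ℝ)

/-- Second half of property (P2): for large families `𝒮` of disjoint `k`-sets and
large `U` disjoint from `⋃ 𝒮`, the bipartite graph `B(𝒮,U)` has an edge. -/
def PropP2b {n : ℕ} (C : ℝ) (G : SimpleGraph (Fin n)) : Prop :=
  ∀ k : ℕ, (k = 1 ∨ k = 2) →
    ∀ S : Finset (Finset (Fin n)), (∀ L ∈ S, L.card = k) →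
      (∀ L ∈ S, ∀ L' ∈ S, L ≠ L' → Disjoint L L') →
      Real.log n / C ^ (k - 1) * ((n : ℝ) / Real.log n) ^ ((k : ℝ) / 2) ≤ (S.card : ℝ) →
      ∀ U : Finset (Fin n), Disjoint U (S.biUnion id) →
        Real.log n / C ^ (k - 1) * ((n : ℝ) / Real.log n) ^ ((k : ℝ) / 2) ≤ (U.card : ℝ) →
        ∃ L ∈ S, ∃ u ∈ U, ∀ x ∈ L, G.Adj x u

/-- A graph `G` on `V = V₀ ∪ ⋯ ∪ V₆` is `(n,C)`-good. -/
def IsGood (n : ℕ) (C : ℝ) (V : Fin 7 → Finset (Fin n)) (G : SimpleGraph (Fin n)) : Prop :=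
  PropP1 C (V 0) G ∧ PropP2a C V G ∧ PropP2b C G

/-- `V₀, …, V₆` is a partition of the vertex set with `|V_i| = εn` for `1 ≤ i ≤ 6`
and `|V₀| = (1-6ε)n`. -/
def IsPartitionV (n : ℕ) (V : Fin 7 → Finset (Fin n)) : Prop :=
  (∀ i j : Fin 7, i ≠ j → Disjoint (V i) (V j)) ∧
  (Finset.univ.biUnion V = Finset.univ) ∧
  (∀ i : Fin 7, i ≠ 0 → ((V i).card : ℝ) = eps * n) ∧
  ((V 0).card : ℝ) = (1 - 6 * eps) * n

end

/-!
A union bound. For `k ∈ {1, 2}` let `s = ⌈(log n / C^(k-1)) (n / log n)^(k/2)⌉`; it suffices to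
treat `|𝒮| = |U| = s`. For one such pair the `s²` events `L ⊆ N(u)` concern pairwise disjoint sets
of edges, because the `L ∈ 𝒮` are disjoint and `U` avoids them, so `B(𝒮,U)` has no edge with
probability `(1 - p^k)^(s²) ≤ exp(-p^k s²)`, and `p^k s ≥ C log n`. There are at most `n^(3s)`
pairs, so for `C ≥ 4` each `k` fails with probability at most `n^(3s) n^(-4s) ≤ 1/n`.
-/

open scoped ENNReal Topology
open Set Filter

lemma isProbabilityMeasure_bernoulliBool {p : ℝ} (h0 : 0 ≤ p) (h1 : p ≤ 1) :
    IsProbabilityMeasure (bernoulliBool p) := by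
  constructor
  simp only [bernoulliBool, Measure.add_apply, Measure.smul_apply,
    Measure.dirac_apply_of_mem (mem_univ _), smul_eq_mul, mul_one]
  rw [← ENNReal.ofReal_add h0 (by linarith)]
  norm_num

lemma bernoulliBool_true (p : ℝ) : bernoulliBool p {true} = ENNReal.ofReal p := by
  simp [bernoulliBool]

namespace MeasureTheory.Measure

variable {ι κ α : Type*} [Fintype ι] [Fintype κ] [MeasurableSpace α]
  (ν : Measure α) [IsProbabilityMeasure ν]

lemma pi_map_comp_of_injective {b : κ → ι} (hb : b.Injective) :
    (Measure.pi fun _ : ι => ν).map (· ∘ b) = Measure.pi fun _ : κ => ν := by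
  refine (pi_eq fun s hs => ?_).symm
  have hpre : (· ∘ b) ⁻¹' univ.pi s = univ.pi fun i => {x | ∀ j, b j = i → x ∈ s j} := by
    ext ω
    simp only [mem_preimage, mem_univ_pi, Function.comp_apply, mem_ofPred_eq]
    exact ⟨fun h _ j hj => hj ▸ h j, fun h j => h (b j) j rfl⟩
  rw [map_apply (by fun_prop) (.univ_pi hs), hpre, pi_pi]
  refine (Fintype.prod_of_injective b hb _ _ (fun i hi => ?_) fun j => ?_).symm
  · exact (congrArg ν (eq_univ_of_forall fun x j hj => absurd ⟨j, hj⟩ hi)).trans measure_univ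
  · congr 1
    ext x
    exact ⟨fun hx j' hj' => hb hj' ▸ hx, fun h => h j rfl⟩

lemma pi_blocks {σ : κ → Type*} [∀ j, Fintype (σ j)] {b : (Σ j, σ j) → ι} (hb : b.Injective)
    {Q : ∀ j, Set (σ j → α)} (hQ : ∀ j, MeasurableSet (Q j)) :
    Measure.pi (fun _ : ι => ν) {ω | ∀ j, (fun s => ω (b ⟨j, s⟩)) ∈ Q j}
      = ∏ j, Measure.pi (fun _ : σ j => ν) (Q j) := by
  have hset : {ω : ι → α | ∀ j, (fun s => ω (b ⟨j, s⟩)) ∈ Q j}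
      = (MeasurableEquiv.piCurry (fun _ _ => α) ∘ (· ∘ b)) ⁻¹' univ.pi Q :=
    Set.ext fun _ => mem_univ_pi.symm
  have hlaw : (Measure.pi fun _ : ι => ν).map
        (MeasurableEquiv.piCurry (fun _ _ => α) ∘ (· ∘ b))
      = Measure.pi fun j => Measure.pi fun _ : σ j => ν := by
    rw [← map_map (by fun_prop) (by fun_prop), pi_map_comp_of_injective ν hb,
      ← infinitePi_eq_pi, infinitePi_map_piCurry (fun _ _ => ν), infinitePi_eq_pi]
    simp only [infinitePi_eq_pi]
  rw [hset, ← map_apply (by fun_prop) (.univ_pi hQ), hlaw, pi_pi]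

end MeasureTheory.Measure

lemma pi_bernoulliBool_not_forall_true {σ : Type*} [Fintype σ] {p : ℝ} (h0 : 0 ≤ p)
    (h1 : p ≤ 1) :
    Measure.pi (fun _ : σ => bernoulliBool p) {f | ¬ ∀ s, f s = true}
      = 1 - ENNReal.ofReal p ^ Fintype.card σ := by
  have := isProbabilityMeasure_bernoulliBool h0 h1
  have hall : {f : σ → Bool | ∀ s, f s = true} = univ.pi fun _ => {true} :=
    Set.ext fun _ => mem_univ_pi.symm
  rw [← compl_ofPred, prob_compl_eq_one_sub (Set.toFinite _).measurableSet, hall, Measure.pi_pi]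
  simp [bernoulliBool_true]

lemma isProbabilityMeasure_gnp (n : ℕ) {p : ℝ} (h0 : 0 ≤ p) (h1 : p ≤ 1) :
    IsProbabilityMeasure (gnp n p) :=
  have := isProbabilityMeasure_bernoulliBool h0 h1
  inferInstanceAs (IsProbabilityMeasure (Measure.pi _))

section RandomGraph

variable {n : ℕ}

lemma graphOf_adj_of_eq_true {ω : EdgeType n → Bool} {x u : Fin n} (hxu : ¬ s(x, u).IsDiag)
    (h : ω ⟨s(x, u), hxu⟩ = true) : (graphOf ω).Adj x u :=
  (SimpleGraph.fromEdgeSet_adj _).2 ⟨⟨hxu, h⟩, fun h' => hxu (Sym2.mk_isDiag_iff.2 h')⟩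

/-- The `|S| |U|` events `L ⊆ N(u)` involve pairwise disjoint sets of edges, hence are
independent. -/
lemma gnp_no_edge_le {k : ℕ} {p : ℝ} (h0 : 0 ≤ p) (h1 : p ≤ 1)
    {S : Finset (Finset (Fin n))} {U : Finset (Fin n)} (hS : ∀ L ∈ S, L.card = k)
    (hd : ∀ L ∈ S, ∀ L' ∈ S, L ≠ L' → Disjoint L L') (hU : Disjoint U (S.biUnion id)) :
    gnp n p {ω | ¬ ∃ L ∈ S, ∃ u ∈ U, ∀ x ∈ L, (graphOf ω).Adj x u}
      ≤ (1 - ENNReal.ofReal p ^ k) ^ (S.card * U.card) := by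
  have := isProbabilityMeasure_bernoulliBool h0 h1
  have hL : ∀ j : ↥(S ×ˢ U), j.1.1 ∈ S := fun j => (Finset.mem_product.1 j.2).1
  have hu : ∀ j : ↥(S ×ˢ U), j.1.2 ∈ U := fun j => (Finset.mem_product.1 j.2).2
  have hout : ∀ (j : ↥(S ×ˢ U)) {x}, x ∈ j.1.1 → x ∉ U := fun j x hx =>
    Finset.disjoint_right.1 hU (Finset.mem_biUnion.2 ⟨_, hL j, hx⟩)
  have hndiag : ∀ (j : ↥(S ×ˢ U)) (x : ↥j.1.1), ¬ s(x.1, j.1.2).IsDiag := fun j x h =>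
    hout j x.2 (Sym2.mk_isDiag_iff.1 h ▸ hu j)
  let b : (Σ j : ↥(S ×ˢ U), ↥j.1.1) → EdgeType n := fun jx => ⟨_, hndiag jx.1 jx.2⟩
  have hb : b.Injective := by
    rintro ⟨j, x⟩ ⟨j', x'⟩ h
    obtain ⟨hx, hu'⟩ : x.1 = x'.1 ∧ j.1.2 = j'.1.2 := by
      rcases Sym2.eq_iff.1 (congrArg Subtype.val h) with h | ⟨hxu, -⟩
      · exact h
      · exact absurd (hxu ▸ hu j') (hout j x.2)
    have hLL : j.1.1 = j'.1.1 := by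
      by_contra hne
      exact Finset.disjoint_left.1 (hd _ (hL j) _ (hL j') hne) x.2 (hx ▸ x'.2)
    obtain rfl : j = j' := Subtype.ext (Prod.ext hLL hu')
    obtain rfl : x = x' := Subtype.ext hx
    rfl
  have hsub : {ω : EdgeType n → Bool | ¬ ∃ L ∈ S, ∃ u ∈ U, ∀ x ∈ L, (graphOf ω).Adj x u}
      ⊆ {ω | ∀ j, (fun x => ω (b ⟨j, x⟩)) ∈ {f | ¬ ∀ x, f x = true}} := by
    intro ω hω j hall
    exact hω ⟨_, hL j, _, hu j, fun x hx => graphOf_adj_of_eq_true _ (hall ⟨x, hx⟩)⟩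
  calc _ ≤ _ := measure_mono hsub
    _ = ∏ j : ↥(S ×ˢ U), (1 - ENNReal.ofReal p ^ k) := by
      rw [gnp, Measure.pi_blocks _ hb fun _ => (Set.toFinite _).measurableSet]
      refine Finset.prod_congr rfl fun j _ => ?_
      rw [pi_bernoulliBool_not_forall_true h0 h1, Fintype.card_coe, hS _ (hL j)]
    _ = _ := by rw [Finset.prod_const, Finset.card_univ, Fintype.card_coe, Finset.card_product]

end RandomGraph

/-- The least admissible size of `𝒮` and of `U` in `PropP2b C`. -/
noncomputable def threshold (C : ℝ) (n k : ℕ) : ℕ :=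
  ⌈Real.log n / C ^ (k - 1) * ((n : ℝ) / Real.log n) ^ ((k : ℝ) / 2)⌉₊

def admissiblePairs (n k s : ℕ) : Finset (Finset (Finset (Fin n)) × Finset (Fin n)) :=
  ((Finset.univ.powersetCard k).powersetCard s ×ˢ Finset.univ.powersetCard s).filter fun SU =>
    (∀ L ∈ SU.1, ∀ L' ∈ SU.1, L ≠ L' → Disjoint L L') ∧ Disjoint SU.2 (SU.1.biUnion id)

section Counting

variable {n : ℕ}

lemma card_admissiblePairs_le (k s : ℕ) : (admissiblePairs n k s).card ≤ n ^ ((k + 1) * s) :=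
  calc (admissiblePairs n k s).card
      ≤ ((Finset.univ.powersetCard k).powersetCard s ×ˢ
          (Finset.univ.powersetCard s : Finset (Finset (Fin n)))).card :=
        Finset.card_filter_le _ _
    _ = (n.choose k).choose s * n.choose s := by simp [Finset.card_powersetCard]
    _ ≤ (n ^ k) ^ s * n ^ s :=
        Nat.mul_le_mul
          ((Nat.choose_le_pow _ _).trans (Nat.pow_le_pow_left (Nat.choose_le_pow _ _) _))
          (Nat.choose_le_pow _ _)
    _ = n ^ ((k + 1) * s) := by ring

lemma exists_admissiblePairs_of_not_propP2b {C : ℝ} {G : SimpleGraph (Fin n)}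
    (h : ¬ PropP2b C G) : ∃ k ∈ ({1, 2} : Finset ℕ), ∃ SU ∈ admissiblePairs n k (threshold C n k),
      ¬ ∃ L ∈ SU.1, ∃ u ∈ SU.2, ∀ x ∈ L, G.Adj x u := by
  simp only [PropP2b, not_forall] at h
  obtain ⟨k, hk, S, hS, hd, hSbig, U, hU, hUbig, hno⟩ := h
  obtain ⟨S', hS'S, hS'⟩ := Finset.exists_subset_card_eq (Nat.ceil_le.2 hSbig)
  obtain ⟨U', hU'U, hU'⟩ := Finset.exists_subset_card_eq (Nat.ceil_le.2 hUbig)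
  refine ⟨k, by rcases hk with rfl | rfl <;> simp, (S', U'), ?_, ?_⟩
  · simp only [admissiblePairs, Finset.mem_filter, Finset.mem_product, Finset.mem_powersetCard]
    refine ⟨⟨⟨fun L hL => Finset.mem_powersetCard.2 ⟨Finset.subset_univ _, hS L (hS'S hL)⟩,
      hS'⟩, Finset.subset_univ _, hU'⟩, fun L hL L' hL' => hd L (hS'S hL) L' (hS'S hL'),
      Finset.disjoint_of_subset_left hU'U (Finset.disjoint_of_subset_right
        (Finset.biUnion_subset_biUnion_of_subset_left id hS'S) hU)⟩
  · rintro ⟨L, hL, u, hu, hadj⟩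
    exact hno ⟨L, hS'S hL, u, hU'U hu, hadj⟩

lemma gnp_not_propP2b_le_sum {C p : ℝ} (h0 : 0 ≤ p) (h1 : p ≤ 1) :
    gnp n p {ω | ¬ PropP2b C (graphOf ω)} ≤ ∑ k ∈ ({1, 2} : Finset ℕ),
      ((admissiblePairs n k (threshold C n k)).card : ℝ≥0∞)
        * (1 - ENNReal.ofReal p ^ k) ^ (threshold C n k * threshold C n k) := by
  have hsub : {ω : EdgeType n → Bool | ¬ PropP2b C (graphOf ω)} ⊆
      ⋃ k ∈ ({1, 2} : Finset ℕ), ⋃ SU ∈ admissiblePairs n k (threshold C n k),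
        {ω | ¬ ∃ L ∈ SU.1, ∃ u ∈ SU.2, ∀ x ∈ L, (graphOf ω).Adj x u} := by
    intro ω hω
    obtain ⟨k, hk, SU, hSU, hno⟩ := exists_admissiblePairs_of_not_propP2b hω
    exact mem_biUnion hk (mem_biUnion hSU hno)
  refine (measure_mono hsub).trans <| (measure_biUnion_finset_le _ _).trans <|
    Finset.sum_le_sum fun k _ => (measure_biUnion_finset_le _ _).trans ?_
  rw [← nsmul_eq_mul, ← Finset.sum_const]
  refine Finset.sum_le_sum fun SU hSU => ?_
  simp only [admissiblePairs, Finset.mem_filter, Finset.mem_product,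
    Finset.mem_powersetCard] at hSU
  obtain ⟨⟨⟨hS, hScard⟩, -, hUcard⟩, hd, hU⟩ := hSU
  have := gnp_no_edge_le h0 h1 (fun L hL => (Finset.mem_powersetCard.1 (hS hL)).2) hd hU
  rwa [hScard, hUcard] at this

end Counting

section Estimates

variable {n : ℕ}

lemma one_le_threshold {C : ℝ} (hC : 0 < C) (k : ℕ) (hn : 1 < n) : 1 ≤ threshold C n k := by
  have : 0 < Real.log n := Real.log_pos (by exact_mod_cast hn)
  exact Nat.one_le_ceil_iff.2 (by positivity)

lemma mul_log_le_pow_mul_threshold {C : ℝ} (hC : 0 < C) {k : ℕ} (hk : k = 1 ∨ k = 2)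
    (hn : 1 < n) : C * Real.log n ≤ (C * √(Real.log n / n)) ^ k * threshold C n k := by
  have ha : 0 < Real.log n := Real.log_pos (by exact_mod_cast hn)
  have hN : (0 : ℝ) < n := by positivity
  have hs : Real.log n / C ^ (k - 1) * ((n : ℝ) / Real.log n) ^ ((k : ℝ) / 2)
      ≤ threshold C n k := Nat.le_ceil _
  rcases hk with rfl | rfl
  · rw [Nat.cast_one, ← Real.sqrt_eq_rpow, pow_zero, div_one] at hs
    calc C * Real.log n
        = C * √(Real.log n / n) * (Real.log n * √(n / Real.log n)) := by
          rw [mul_mul_mul_comm, ← Real.sqrt_mul (by positivity), div_mul_div_comm,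
            mul_comm (Real.log n), div_self (by positivity), Real.sqrt_one, mul_one]
      _ ≤ (C * √(Real.log n / n)) ^ 1 * threshold C n 1 := by
          rw [pow_one]; gcongr
  · rw [Nat.cast_ofNat, div_self two_ne_zero, Real.rpow_one, pow_one] at hs
    calc C * Real.log n
        = (C * √(Real.log n / n)) ^ 2 * (Real.log n / C * (n / Real.log n)) := by
          rw [mul_pow, Real.sq_sqrt (by positivity)]
          field_simp
      _ ≤ (C * √(Real.log n / n)) ^ 2 * threshold C n 2 := by gcongr

lemma pow_mul_one_sub_pow_le {s : ℕ} {q : ℝ} (hn : 1 < n) (hs : 1 ≤ s) (hq1 : q ≤ 1)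
    (hqs : 4 * Real.log n ≤ q * s) : (n : ℝ) ^ (3 * s) * (1 - q) ^ (s * s) ≤ 1 / n := by
  have ha : 0 < Real.log n := Real.log_pos (by exact_mod_cast hn)
  have hN : (0 : ℝ) < n := by positivity
  have hs' : (1 : ℝ) ≤ s := by exact_mod_cast hs
  calc (n : ℝ) ^ (3 * s) * (1 - q) ^ (s * s)
      ≤ Real.exp (Real.log n) ^ (3 * s) * Real.exp (-q) ^ (s * s) := by
        rw [Real.exp_log hN]
        gcongr
        linarith [Real.add_one_le_exp (-q)]
    _ = Real.exp (3 * s * Real.log n - q * s * s) := by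
        rw [← Real.exp_nat_mul, ← Real.exp_nat_mul, ← Real.exp_add]
        push_cast
        ring_nf
    _ ≤ Real.exp (-Real.log n) := by
        gcongr
        nlinarith
    _ = 1 / n := by rw [Real.exp_neg, Real.exp_log hN, one_div]

lemma card_admissiblePairs_mul_le {C : ℝ} (hC : 4 ≤ C) {k : ℕ} (hk : k = 1 ∨ k = 2)
    (hn : 1 < n) (hp : C * √(Real.log n / n) ≤ 1) :
    ((admissiblePairs n k (threshold C n k)).card : ℝ≥0∞)
      * (1 - ENNReal.ofReal (C * √(Real.log n / n)) ^ k) ^ (threshold C n k * threshold C n k)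
      ≤ (n : ℝ≥0∞)⁻¹ := by
  set p := C * √(Real.log n / n)
  set s := threshold C n k
  have ha : 0 < Real.log n := Real.log_pos (by exact_mod_cast hn)
  have hp0 : 0 ≤ p := by positivity
  have hpk : p ^ k ≤ 1 := pow_le_one₀ hp0 hp
  have hq : 4 * Real.log n ≤ p ^ k * s :=
    (by nlinarith : 4 * Real.log n ≤ C * Real.log n).trans
      (mul_log_le_pow_mul_threshold (by linarith) hk hn)
  have hcard : ((admissiblePairs n k s).card : ℝ) ≤ (n : ℝ) ^ (3 * s) := by
    have hk3 : (k + 1) * s ≤ 3 * s := Nat.mul_le_mul_right _ (by omega)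
    exact_mod_cast (card_admissiblePairs_le k s).trans (Nat.pow_le_pow_right (by omega) hk3)
  have hbound : (n : ℝ) ^ (3 * s) * (1 - p ^ k) ^ (s * s) ≤ 1 / n :=
    pow_mul_one_sub_pow_le hn (one_le_threshold (by linarith) k hn) hpk hq
  clear_value p s
  calc ((admissiblePairs n k s).card : ℝ≥0∞) * (1 - ENNReal.ofReal p ^ k) ^ (s * s)
      = ENNReal.ofReal ((admissiblePairs n k s).card * (1 - p ^ k) ^ (s * s)) := by
        rw [ENNReal.ofReal_mul (by positivity), ENNReal.ofReal_natCast,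
          ENNReal.ofReal_pow (sub_nonneg.2 hpk),
          ENNReal.ofReal_sub _ (by positivity), ENNReal.ofReal_one, ENNReal.ofReal_pow hp0]
    _ ≤ ENNReal.ofReal (1 / n) :=
        ENNReal.ofReal_le_ofReal ((mul_le_mul_of_nonneg_right hcard
          (pow_nonneg (sub_nonneg.2 hpk) _)).trans hbound)
    _ = (n : ℝ≥0∞)⁻¹ := by
        rw [one_div, ENNReal.ofReal_inv_of_pos (by positivity), ENNReal.ofReal_natCast]

lemma gnp_not_propP2b_le {C : ℝ} (hC : 4 ≤ C) (hn : 1 < n) (hp : C * √(Real.log n / n) ≤ 1) :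
    gnp n (C * √(Real.log n / n)) {ω | ¬ PropP2b C (graphOf ω)} ≤ 2 * (n : ℝ≥0∞)⁻¹ := by
  refine (gnp_not_propP2b_le_sum (by positivity) hp).trans ?_
  rw [Finset.sum_pair (by norm_num : (1 : ℕ) ≠ 2), two_mul]
  exact add_le_add (card_admissiblePairs_mul_le hC (.inl rfl) hn hp)
    (card_admissiblePairs_mul_le hC (.inr rfl) hn hp)

lemma eventually_mul_sqrt_log_div_le_one (C : ℝ) :
    ∀ᶠ n : ℕ in atTop, C * √(Real.log n / n) ≤ 1 := by
  have hlim : Tendsto (fun n : ℕ => C * √(Real.log n / n)) atTop (𝓝 0) := by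
    simpa using ((Real.isLittleO_log_id_atTop.tendsto_div_nhds_zero.comp
      tendsto_natCast_atTop_atTop).sqrt).const_mul C
  exact hlim.eventually_le_const zero_lt_one

lemma tendsto_gnp_not_propP2b {C : ℝ} (hC : 4 ≤ C) :
    Tendsto (fun n : ℕ => gnp n (C * √(Real.log n / n)) {ω | ¬ PropP2b C (graphOf ω)})
      atTop (𝓝 0) := by
  have hlim : Tendsto (fun n : ℕ => 2 * (n : ℝ≥0∞)⁻¹) atTop (𝓝 0) := by
    simpa using ENNReal.Tendsto.const_mul ENNReal.tendsto_inv_nat_nhds_zero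
      (.inr ENNReal.ofNat_ne_top)
  refine tendsto_of_tendsto_of_tendsto_of_le_of_le' tendsto_const_nhds hlim
    (.of_forall fun _ => bot_le) ?_
  filter_upwards [eventually_mul_sqrt_log_div_le_one C, eventually_gt_atTop 1]
    with n hp hn using gnp_not_propP2b_le hC hn hp

end Estimates

theorem stmt9 :
    ∃ C : ℝ, 0 < C ∧
      Filter.Tendsto
        (fun n : ℕ =>
          gnp n (C * Real.sqrt (Real.log n / n))
            {ω | PropP2b C (graphOf ω)})
        Filter.atTop (nhds 1) := by
  refine ⟨4, by norm_num, ?_⟩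
  have hcompl : (fun n : ℕ => 1 - gnp n (4 * √(Real.log n / n)) {ω | ¬ PropP2b 4 (graphOf ω)})
      =ᶠ[atTop] fun n => gnp n (4 * √(Real.log n / n)) {ω | PropP2b 4 (graphOf ω)} := by
    filter_upwards [eventually_mul_sqrt_log_div_le_one 4] with n hp
    have := isProbabilityMeasure_gnp n (by positivity) hp
    rw [← prob_compl_eq_one_sub (Set.toFinite _).measurableSet, compl_ofPred]
    simp only [not_not]
  simpa using (ENNReal.Tendsto.sub tendsto_const_nhds (tendsto_gnp_not_propP2b le_rfl)
    (.inl ENNReal.one_ne_top)).congr' hcompl
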